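/- The function T satisfies: (a) q^j·T(i,j+1,k)·T(i,j−1,k) = q^{j−i} · ( q^i·T(i+1,j,k)·T(i−1,j,k) ) for all i,j ∈ ℤ and all integers k ≥ 0; and (b) T(i,j,k+1)·T(i,j,k−1) = (1 + q^{j−i}) · q^i·T(i+1,j,k)·T(i−1,j,k) for all i,j ∈ ℤ and all integers k ≥ 1. -/

import Mathlib

/-- The explicit solution of the inhomogeneous T-system with coefficients
`λ(a) = μ(a) = qᵃ` and initial data `T(i,j,0) = T(i,j,1) = 1`. -/
noncomputable def Texp {F : Type*} [Field F] (q : F) (i j : ℤ) (k : ℕ) : F :=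
  q ^ (((k * (k - 1) / 2 : ℕ) : ℤ) * min i j) *
    (∏ m ∈ Finset.Icc (1 : ℤ) (((k : ℤ) - |i - j|) / 2),
      ∏ a ∈ Finset.Icc (2 * m - k + |i - j|) ((k : ℤ) - |i - j| - 2 * m), (1 + q ^ a)) *
    (∏ m ∈ Finset.Icc (1 : ℤ) |i - j|,
      ∏ a ∈ Finset.Icc m ((k : ℤ) - |i - j| + 2 * m - 2), (1 + q ^ a))

open Finset

def Ee (k : ℕ) (b : ℤ) : ℕ := ((k : ℤ) - |b|).toNat / 2

noncomputable def Rr {F : Type*} [Field F] (q : F) (k : ℕ) (d : ℤ) : F :=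
  ∏ b ∈ Icc (-(k:ℤ)) (k:ℤ), (1 + q ^ (d + b)) ^ Ee k b

section
variable {F : Type*} [Field F]

-- generic: double product with dependent inner Icc ranges, as powers over a big set
lemma dprod_eq_pow (f : ℤ → F) (s : Finset ℤ) (lo hi : ℤ → ℤ) (B : Finset ℤ)
    (hsub : ∀ m ∈ s, Icc (lo m) (hi m) ⊆ B) :
    (∏ m ∈ s, ∏ a ∈ Icc (lo m) (hi m), f a)
      = ∏ a ∈ B, f a ^ (s.filter (fun m => a ∈ Icc (lo m) (hi m))).card := by
  have h1 : (∏ m ∈ s, ∏ a ∈ Icc (lo m) (hi m), f a)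
      = ∏ m ∈ s, ∏ a ∈ B, (if a ∈ Icc (lo m) (hi m) then f a else 1) := by
    refine Finset.prod_congr rfl fun m hm => ?_
    rw [Finset.prod_ite_mem, Finset.inter_eq_right.mpr (hsub m hm)]
  rw [h1, Finset.prod_comm]
  refine Finset.prod_congr rfl fun a _ => ?_
  rw [← Finset.prod_filter, Finset.prod_const]

end

lemma count (k : ℕ) (d a : ℤ) (hd : 0 ≤ d) :
    ((((k:ℤ) - d - (a.natAbs:ℤ))/2 + 1 - 1).toNat) +
      ((min d a + 1 - max 1 ((a + d + 3 - (k:ℤ))/2)).toNat)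
    = ((k:ℤ) - |a - d|).toNat / 2 := by
  rw [Int.abs_eq_natAbs]; omega

lemma key {F : Type*} [Field F] (q : F) (k : ℕ) (d : ℤ) (hd : 0 ≤ d) :
    (∏ m ∈ Icc (1:ℤ) (((k:ℤ) - d) / 2),
      ∏ a ∈ Icc (2*m - (k:ℤ) + d) ((k:ℤ) - d - 2*m), (1 + q ^ a)) *
    (∏ m ∈ Icc (1:ℤ) d,
      ∏ a ∈ Icc m ((k:ℤ) - d + 2*m - 2), (1 + q ^ a)) = Rr q k d := by
  set B : Finset ℤ := Icc (-(k:ℤ)) ((k:ℤ) + d) with hB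
  rw [dprod_eq_pow _ _ _ _ B (fun m hm => ?subA), dprod_eq_pow _ _ _ _ B (fun m hm => ?subB)]
  case subA =>
    simp only [mem_Icc] at hm
    exact Icc_subset_Icc (by omega) (by omega)
  case subB =>
    simp only [mem_Icc] at hm
    exact Icc_subset_Icc (by omega) (by omega)
  -- cards
  have hcA : ∀ a : ℤ, ((Icc (1:ℤ) (((k:ℤ) - d) / 2)).filter
      (fun m => a ∈ Icc (2*m - (k:ℤ) + d) ((k:ℤ) - d - 2*m))).card
      = ((((k:ℤ) - d - (a.natAbs:ℤ))/2 + 1 - 1).toNat) := by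
    intro a
    have : (Icc (1:ℤ) (((k:ℤ) - d) / 2)).filter
        (fun m => a ∈ Icc (2*m - (k:ℤ) + d) ((k:ℤ) - d - 2*m))
        = Icc (1:ℤ) (((k:ℤ) - d - (a.natAbs:ℤ))/2) := by
      ext x
      simp only [mem_filter, mem_Icc]
      omega
    rw [this, Int.card_Icc]
  have hcB : ∀ a : ℤ, ((Icc (1:ℤ) d).filter
      (fun m => a ∈ Icc m ((k:ℤ) - d + 2*m - 2))).card
      = ((min d a + 1 - max 1 ((a + d + 3 - (k:ℤ))/2)).toNat) := by
    intro a
    have : (Icc (1:ℤ) d).filter (fun m => a ∈ Icc m ((k:ℤ) - d + 2*m - 2))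
        = Icc (max 1 ((a + d + 3 - (k:ℤ))/2)) (min d a) := by
      ext x
      simp only [mem_filter, mem_Icc, le_max_iff, max_le_iff, le_min_iff, min_le_iff]
      omega
    rw [this, Int.card_Icc]
  -- RHS as product over B
  have hR : Rr q k d = ∏ a ∈ B, (1 + q ^ a) ^ Ee k (a - d) := by
    unfold Rr
    have h2 : ∏ b ∈ Icc (-(k:ℤ)) (k:ℤ), (1 + q ^ (d + b)) ^ Ee k b
        = ∏ a ∈ Icc (d + -(k:ℤ)) (d + (k:ℤ)), (1 + q ^ a) ^ Ee k (a - d) := by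
      rw [← Finset.map_add_left_Icc, Finset.prod_map]
      refine Finset.prod_congr rfl fun b _ => ?_
      simp [addLeftEmbedding_apply]
    rw [h2]
    apply Finset.prod_subset
    · exact Icc_subset_Icc (by omega) (by omega)
    · intro x hx hnx
      have h0 : Ee k (x - d) = 0 := by
        simp only [mem_Icc] at hx hnx
        unfold Ee
        rw [Int.abs_eq_natAbs]
        omega
      simp [h0]
  rw [hR, ← Finset.prod_mul_distrib]
  refine Finset.prod_congr rfl fun a _ => ?_
  rw [hcA, hcB, ← pow_add, count k d a hd]
  rfl

lemma Ee_zero {k : ℕ} {b : ℤ} (h : (k:ℤ) ≤ |b| + 1) : Ee k b = 0 := by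
  unfold Ee; rw [Int.abs_eq_natAbs] at *; omega

lemma Rr_eq {F : Type*} [Field F] (q : F) (k : ℕ) (d : ℤ) {L U : ℤ}
    (hL : L ≤ -(k:ℤ)) (hU : (k:ℤ) ≤ U) :
    Rr q k d = ∏ b ∈ Icc L U, (1 + q ^ (d + b)) ^ Ee k b := by
  unfold Rr
  apply Finset.prod_subset (Icc_subset_Icc hL hU)
  intro x hx hnx
  have h0 : Ee k x = 0 := by
    simp only [mem_Icc] at hx hnx
    apply Ee_zero; rw [Int.abs_eq_natAbs]; omega
  simp [h0]

lemma Eid (k : ℕ) (hk : 1 ≤ k) (c : ℤ) :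
    Ee (k+1) c + Ee (k-1) c = Ee k (c-1) + Ee k (c+1) + (if c = 0 then 1 else 0) := by
  unfold Ee
  simp only [Int.abs_eq_natAbs]
  split <;> omega

-- shifted Rr as product over common set
lemma Rr_shift {F : Type*} [Field F] (q : F) (k : ℕ) (d t : ℤ) {L U : ℤ}
    (hL : L ≤ -(k:ℤ) + t) (hU : (k:ℤ) + t ≤ U) :
    Rr q k (d + t) = ∏ c ∈ Icc L U, (1 + q ^ (d + c)) ^ Ee k (c - t) := by
  unfold Rr
  have h2 : ∏ b ∈ Icc (-(k:ℤ)) (k:ℤ), (1 + q ^ (d + t + b)) ^ Ee k b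
      = ∏ c ∈ Icc (-(k:ℤ) + t) ((k:ℤ) + t), (1 + q ^ (d + c)) ^ Ee k (c - t) := by
    rw [← Finset.map_add_right_Icc, Finset.prod_map]
    refine Finset.prod_congr rfl fun b _ => ?_
    simp only [addRightEmbedding_apply, add_sub_cancel_right]
    ring_nf
  rw [h2]
  apply Finset.prod_subset (Icc_subset_Icc hL hU)
  intro x hx hnx
  have h0 : Ee k (x - t) = 0 := by
    simp only [mem_Icc] at hx hnx
    apply Ee_zero; rw [Int.abs_eq_natAbs]; omega
  simp [h0]

lemma Rr_rec {F : Type*} [Field F] (q : F) (k : ℕ) (hk : 1 ≤ k) (d : ℤ) :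
    Rr q (k+1) d * Rr q (k-1) d = (1 + q ^ d) * (Rr q k (d+1) * Rr q k (d-1)) := by
  have e1 : Rr q (k+1) d = ∏ c ∈ Icc (-(k:ℤ)-1) ((k:ℤ)+1), (1 + q ^ (d + c)) ^ Ee (k+1) c := by
    apply Rr_eq <;> omega
  have e2 : Rr q (k-1) d = ∏ c ∈ Icc (-(k:ℤ)-1) ((k:ℤ)+1), (1 + q ^ (d + c)) ^ Ee (k-1) c := by
    apply Rr_eq <;> omega
  have e3 : Rr q k (d+1) = ∏ c ∈ Icc (-(k:ℤ)-1) ((k:ℤ)+1), (1 + q ^ (d + c)) ^ Ee k (c - 1) :=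
    Rr_shift q k d 1 (by omega) (by omega)
  have e4 : Rr q k (d-1) = ∏ c ∈ Icc (-(k:ℤ)-1) ((k:ℤ)+1), (1 + q ^ (d + c)) ^ Ee k (c + 1) := by
    have := Rr_shift q k d (-1) (L := -(k:ℤ)-1) (U := (k:ℤ)+1) (by omega) (by omega)
    rw [show d + -1 = d - 1 by ring] at this
    rw [this]
    refine Finset.prod_congr rfl fun c _ => ?_
    rw [show c - (-1) = c + 1 by ring]
  have e5 : (1 + q ^ d)
      = ∏ c ∈ Icc (-(k:ℤ)-1) ((k:ℤ)+1), (1 + q ^ (d + c)) ^ (if c = 0 then 1 else 0) := by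
    have h6 : ∀ c ∈ Icc (-(k:ℤ)-1) ((k:ℤ)+1),
        (1 + q ^ (d + c)) ^ (if c = 0 then 1 else 0)
          = (if c = 0 then 1 + q ^ (d + c) else 1) := by
      intro c _; split <;> simp
    rw [Finset.prod_congr rfl h6, Finset.prod_ite_eq' _ _ (fun c => 1 + q ^ (d + c)),
      if_pos (show (0:ℤ) ∈ Icc (-(k:ℤ)-1) ((k:ℤ)+1) by simp only [mem_Icc]; omega)]
    norm_num
  rw [e1, e2, e3, e4, e5, ← Finset.prod_mul_distrib, ← Finset.prod_mul_distrib,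
    ← Finset.prod_mul_distrib]
  refine Finset.prod_congr rfl fun c _ => ?_
  rw [← pow_add, ← pow_add, ← pow_add, Eid k hk c]
  ring

lemma zpow_sum {F : Type*} [Field F] {q : F} (hq : q ≠ 0) {ι : Type*} (s : Finset ι) (f : ι → ℤ) :
    q ^ (∑ i ∈ s, f i) = ∏ i ∈ s, q ^ f i := by
  classical
  induction s using Finset.cons_induction with
  | empty => simp
  | cons a s ha ih => rw [Finset.sum_cons, Finset.prod_cons, zpow_add₀ hq, ih]

lemma sumE2 : ∀ k : ℕ, 2 * ∑ b ∈ Icc (-(k:ℤ)) (k:ℤ), Ee k b = k * (k - 1) := by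
  intro k
  induction k using Nat.twoStepInduction with
  | zero => decide
  | one => decide
  | more n ih _ =>
    have hsub : ∑ b ∈ Icc (-((n:ℤ)+2)) ((n:ℤ)+2), Ee (n+2) b
        = ∑ b ∈ Icc (-(n:ℤ)) (n:ℤ), Ee (n+2) b := by
      symm
      apply Finset.sum_subset (Icc_subset_Icc (by omega) (by omega))
      intro x hx hnx
      simp only [mem_Icc] at hx hnx
      apply Ee_zero; simp only [Int.abs_eq_natAbs]; omega
    have hpt : ∀ b ∈ Icc (-(n:ℤ)) (n:ℤ), Ee (n+2) b = Ee n b + 1 := by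
      intro b hb
      simp only [mem_Icc] at hb
      unfold Ee
      simp only [Int.abs_eq_natAbs]
      omega
    have hcast : ((n:ℤ)+2) = ((n+2 : ℕ) : ℤ) := by push_cast; ring
    have hcard : (Icc (-(n:ℤ)) (n:ℤ)).card = 2*n+1 := by
      rw [Int.card_Icc]; omega
    calc 2 * ∑ b ∈ Icc (-((n+2:ℕ):ℤ)) ((n+2:ℕ):ℤ), Ee (n+2) b
        = 2 * ∑ b ∈ Icc (-((n:ℤ)+2)) ((n:ℤ)+2), Ee (n+2) b := by rw [hcast]
      _ = 2 * ∑ b ∈ Icc (-(n:ℤ)) (n:ℤ), (Ee n b + 1) := by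
          rw [hsub, Finset.sum_congr rfl hpt]
      _ = 2 * (∑ b ∈ Icc (-(n:ℤ)) (n:ℤ), Ee n b) + 2*(2*n+1) := by
          rw [Finset.sum_add_distrib, Finset.sum_const, hcard]; ring
      _ = n * (n-1) + 2*(2*n+1) := by rw [ih]
      _ = (n+2) * (n+2-1) := by
          cases n with
          | zero => rfl
          | succ m =>
            have h : (m+1)*m + 2*(2*(m+1)+1) = (m+3)*(m+2) := by ring
            have h2 : (m+1+2)*(m+1+2-1) = (m+3)*(m+2) := by norm_num
            have h3 : (m+1)*(m+1-1) = (m+1)*m := by norm_num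
            omega

lemma sumE (k : ℕ) : ∑ b ∈ Icc (-(k:ℤ)) (k:ℤ), Ee k b = k * (k - 1) / 2 := by
  have := sumE2 k
  omega

lemma sumbE (k : ℕ) : ∑ b ∈ Icc (-(k:ℤ)) (k:ℤ), b * (Ee k b : ℤ) = 0 := by
  refine Finset.sum_involution (fun b _ => -b) ?_ ?_ ?_ ?_
  · intro a ha
    have h : Ee k (-a) = Ee k a := by unfold Ee; rw [abs_neg]
    show a * (Ee k a : ℤ) + (-a) * (Ee k (-a) : ℤ) = 0
    rw [h]; ring
  · intro a ha h hc
    have hc' : -a = a := hc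
    apply h
    have h0 : a = 0 := by omega
    simp [h0]
  · intro a ha
    show -a ∈ Icc (-(k:ℤ)) (k:ℤ)
    simp only [mem_Icc] at ha ⊢
    omega
  · intro a ha
    show -(-a) = a
    ring

lemma Rr_reflect {F : Type*} [Field F] (q : F) (hq : q ≠ 0) (k : ℕ) (d : ℤ) :
    Rr q k (-d) = q ^ (-(d * ((k*(k-1)/2 : ℕ) : ℤ))) * Rr q k d := by
  unfold Rr
  have step1 : ∏ b ∈ Icc (-(k:ℤ)) (k:ℤ), (1 + q ^ (-d + b)) ^ Ee k b
      = ∏ b ∈ Icc (-(k:ℤ)) (k:ℤ), (1 + q ^ (-(d + b))) ^ Ee k b := by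
    refine Finset.prod_nbij' (fun b => -b) (fun b => -b) ?_ ?_ ?_ ?_ ?_
    · intro a ha; simp only [mem_Icc] at ha ⊢; omega
    · intro a ha; simp only [mem_Icc] at ha ⊢; omega
    · intro a _; ring
    · intro a _; ring
    · intro a _
      have h : Ee k (-a) = Ee k a := by unfold Ee; rw [abs_neg]
      rw [show -d + a = -(d + -a) by ring, h]
  rw [step1]
  have step2 : ∀ b ∈ Icc (-(k:ℤ)) (k:ℤ),
      (1 + q ^ (-(d + b))) ^ Ee k b
        = (q ^ (-(d + b) * (Ee k b : ℤ))) * (1 + q ^ (d + b)) ^ Ee k b := by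
    intro b _
    have hf : 1 + q ^ (-(d + b)) = q ^ (-(d + b)) * (1 + q ^ (d + b)) := by
      rw [mul_add, mul_one, ← zpow_add₀ hq, neg_add_cancel, zpow_zero, add_comm]
    rw [hf, mul_pow, ← zpow_natCast (q ^ (-(d+b))) (Ee k b), ← zpow_mul]
  rw [Finset.prod_congr rfl step2, Finset.prod_mul_distrib, ← zpow_sum hq]
  congr 2
  have h1 : ∀ b ∈ Icc (-(k:ℤ)) (k:ℤ),
      -(d + b) * (Ee k b : ℤ) = -(d * (Ee k b : ℤ)) + -(b * (Ee k b : ℤ)) := by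
    intro b _; ring
  rw [Finset.sum_congr rfl h1, Finset.sum_add_distrib, Finset.sum_neg_distrib,
    Finset.sum_neg_distrib, ← Finset.mul_sum, sumbE, neg_zero, add_zero]
  have h2 : ∑ b ∈ Icc (-(k:ℤ)) (k:ℤ), ((Ee k b : ℤ)) = ((k*(k-1)/2 : ℕ) : ℤ) := by
    rw [← Nat.cast_sum, sumE]
  rw [h2]


lemma texp_eq {F : Type*} [Field F] (q : F) (i j : ℤ) (k : ℕ) :
    Texp q i j k = q ^ (((k * (k - 1) / 2 : ℕ) : ℤ) * min i j) * Rr q k |i - j| := by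
  unfold Texp
  rw [mul_assoc, key q k |i - j| (abs_nonneg _)]

lemma texp_shift {F : Type*} [Field F] (q : F) (hq : q ≠ 0) (i j : ℤ) (k : ℕ) :
    Texp q i (j+1) k = q ^ ((k * (k - 1) / 2 : ℕ) : ℤ) * Texp q (i-1) j k := by
  rw [texp_eq, texp_eq]
  have h1 : |i - (j+1)| = |i - 1 - j| := by congr 1; ring
  have h2 : min i (j+1) = min (i-1) j + 1 := by omega
  rw [h1, h2, mul_add, mul_one, zpow_add₀ hq]
  ring

lemma hCnat (k : ℕ) (hk : 1 ≤ k) :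
    (k+1)*(k+1-1)/2 + (k-1)*(k-1-1)/2 = 2*(k*(k-1)/2) + 1 := by
  obtain ⟨m, rfl⟩ : ∃ m, k = m + 1 := ⟨k - 1, by omega⟩
  have e : Even (m*(m+1)) := Nat.even_mul_succ_self m
  have a1 : (m+1+1)*(m+1+1-1) = m*(m+1) + 2*(m+1) := by
    simp only [Nat.add_sub_cancel]; ring
  have a2 : m*(m-1) + 2*m = m*(m+1) := by
    cases m with
    | zero => rfl
    | succ n => simp only [Nat.add_sub_cancel]; ring
  have a3 : (m+1)*(m+1-1) = m*(m+1) := by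
    simp only [Nat.add_sub_cancel]; ring
  have a4 : (m+1-1)*(m+1-1-1) = m*(m-1) := by simp only [Nat.add_sub_cancel]
  omega

/-- Two ratio identities satisfied by the explicit solution `Texp`. -/
theorem texp_ratio_identities
    {F : Type*} [Field F] (q : F) (hq : q ≠ 0) :
    (∀ i j : ℤ, ∀ k : ℕ,
      q ^ j * Texp q i (j + 1) k * Texp q i (j - 1) k =
        q ^ (j - i) * (q ^ i * Texp q (i + 1) j k * Texp q (i - 1) j k)) ∧
    (∀ i j : ℤ, ∀ k : ℕ, 1 ≤ k →
      Texp q i j (k + 1) * Texp q i j (k - 1) =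
        (1 + q ^ (j - i)) * (q ^ i * Texp q (i + 1) j k * Texp q (i - 1) j k)) := by
  constructor
  · intro i j k
    have s1 := texp_shift q hq i j k
    have s2 : Texp q (i+1) j k
        = q ^ ((k * (k - 1) / 2 : ℕ) : ℤ) * Texp q i (j-1) k := by
      have h := texp_shift q hq (i+1) (j-1) k
      rw [show j - 1 + 1 = j by ring, show i + 1 - 1 = i by ring] at h
      exact h
    rw [s1, s2]
    have hm : q ^ (j - i) * q ^ (i:ℤ) = q ^ (j:ℤ) := by
      rw [← zpow_add₀ hq, sub_add_cancel]
    linear_combination (-(Texp q (i-1) j k * Texp q i (j-1) k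
      * q ^ ((k * (k - 1) / 2 : ℕ) : ℤ))) * hm
  · intro i j k hk
    have hCz : (((k+1)*(k+1-1)/2 : ℕ) : ℤ) + (((k-1)*(k-1-1)/2 : ℕ) : ℤ)
        = 2 * ((k*(k-1)/2 : ℕ) : ℤ) + 1 := by exact_mod_cast hCnat k hk
    set c1 : ℤ := (((k+1)*(k+1-1)/2 : ℕ) : ℤ) with hc1
    set c2 : ℤ := (((k-1)*(k-1-1)/2 : ℕ) : ℤ) with hc2
    set c0 : ℤ := ((k*(k-1)/2 : ℕ) : ℤ) with hc0
    rcases lt_trichotomy i j with hij | hij | hij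
    · -- i < j
      simp only [texp_eq]
      rw [show |i - j| = j - i by rw [abs_of_nonpos (by omega : i - j ≤ 0)]; ring,
        show |i + 1 - j| = (j - i) - 1 by rw [abs_of_nonpos (by omega : i + 1 - j ≤ 0)]; ring,
        show |i - 1 - j| = (j - i) + 1 by rw [abs_of_nonpos (by omega : i - 1 - j ≤ 0)]; ring,
        show min i j = i by omega, show min (i+1) j = i+1 by omega,
        show min (i-1) j = i-1 by omega]
      have hR := Rr_rec q k hk (j - i)
      calc q ^ (c1 * i) * Rr q (k+1) (j - i) * (q ^ (c2 * i) * Rr q (k-1) (j - i))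
          = q ^ (c1 * i + c2 * i) * (Rr q (k+1) (j-i) * Rr q (k-1) (j-i)) := by
            rw [zpow_add₀ hq]; ring
        _ = q ^ (c1 * i + c2 * i)
            * ((1 + q ^ (j-i)) * (Rr q k ((j-i)+1) * Rr q k ((j-i)-1))) := by rw [hR]
        _ = (1 + q ^ (j - i)) * (q ^ (i:ℤ) * (q ^ (c0 * (i+1)) * Rr q k (j - i - 1))
            * (q ^ (c0 * (i-1)) * Rr q k (j - i + 1))) := by
            rw [show c1 * i + c2 * i = i + (c0 * (i+1) + c0 * (i-1)) by
              linear_combination i * hCz, zpow_add₀ hq, zpow_add₀ hq]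
            ring
    · -- i = j
      subst hij
      simp only [texp_eq]
      rw [show i - i = (0:ℤ) by ring, abs_zero,
        show |i + 1 - i| = (1:ℤ) by rw [show i + 1 - i = (1:ℤ) by ring]; exact abs_one,
        show |i - 1 - i| = (1:ℤ) by rw [show i - 1 - i = (-1:ℤ) by ring]; simp,
        min_self, show min (i+1) i = i by omega, show min (i-1) i = i-1 by omega]
      have hR := Rr_rec q k hk 0
      rw [show (0:ℤ) + 1 = 1 by norm_num, show (0:ℤ) - 1 = -1 by norm_num] at hR
      have hrefl := Rr_reflect q hq k 1
      calc q ^ (c1 * i) * Rr q (k+1) 0 * (q ^ (c2 * i) * Rr q (k-1) 0)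
          = q ^ (c1 * i + c2 * i) * (Rr q (k+1) 0 * Rr q (k-1) 0) := by
            rw [zpow_add₀ hq]; ring
        _ = q ^ (c1 * i + c2 * i)
            * ((1 + q ^ (0:ℤ)) * (Rr q k 1 * (q ^ (-(1 * c0)) * Rr q k 1))) := by
            rw [hR, hrefl]
        _ = q ^ ((i + c0 * i + c0 * (i-1)) + 1 * c0)
            * ((1 + q ^ (0:ℤ)) * (Rr q k 1 * (q ^ (-(1 * c0)) * Rr q k 1))) := by
            rw [show c1 * i + c2 * i = (i + c0 * i + c0 * (i-1)) + 1 * c0 by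
              linear_combination i * hCz]
        _ = (1 + q ^ (0:ℤ)) * (q ^ (i:ℤ) * (q ^ (c0 * i) * Rr q k 1)
            * (q ^ (c0 * (i-1)) * Rr q k 1)) := by
            rw [zpow_add₀ hq, zpow_add₀ hq, zpow_add₀ hq]
            have hinv : q ^ (1 * c0 : ℤ) * q ^ (-(1 * c0) : ℤ) = 1 := by
              rw [← zpow_add₀ hq, add_neg_cancel, zpow_zero]
            linear_combination ((1 + q ^ (0:ℤ)) * q ^ (i:ℤ) * q ^ (c0 * i)
              * q ^ (c0 * (i-1)) * Rr q k 1 * Rr q k 1) * hinv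
    · -- j < i
      simp only [texp_eq]
      rw [show |i - j| = i - j by rw [abs_of_nonneg (by omega : (0:ℤ) ≤ i - j)],
        show |i + 1 - j| = (i - j) + 1 by
          rw [abs_of_nonneg (by omega : (0:ℤ) ≤ i + 1 - j)]; ring,
        show |i - 1 - j| = (i - j) - 1 by
          rw [abs_of_nonneg (by omega : (0:ℤ) ≤ i - 1 - j)]; ring,
        show min i j = j by omega, show min (i+1) j = j by omega,
        show min (i-1) j = j by omega]
      have hR := Rr_rec q k hk (i - j)
      have hfac : q ^ (c1 * j + c2 * j) * (1 + q ^ (i-j))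
          = (1 + q ^ (j-i)) * q ^ (i + (c0 * j + c0 * j)) := by
        rw [mul_add, add_mul, mul_one, one_mul, ← zpow_add₀ hq, ← zpow_add₀ hq,
          show c1 * j + c2 * j + (i - j) = i + (c0 * j + c0 * j) by
            linear_combination j * hCz,
          show c1 * j + c2 * j = j - i + (i + (c0 * j + c0 * j)) by
            linear_combination j * hCz]
        ring
      calc q ^ (c1 * j) * Rr q (k+1) (i - j) * (q ^ (c2 * j) * Rr q (k-1) (i - j))
          = q ^ (c1 * j + c2 * j)
            * (Rr q (k+1) (i-j) * Rr q (k-1) (i-j)) := by rw [zpow_add₀ hq]; ring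
        _ = (q ^ (c1 * j + c2 * j) * (1 + q ^ (i-j)))
            * (Rr q k ((i-j)+1) * Rr q k ((i-j)-1)) := by rw [hR]; ring
        _ = (1 + q ^ (j - i)) * (q ^ (i:ℤ) * (q ^ (c0 * j) * Rr q k (i - j + 1))
            * (q ^ (c0 * j) * Rr q k (i - j - 1))) := by
            rw [hfac, zpow_add₀ hq, zpow_add₀ hq]
            ring
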